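/- arXiv:2206.03656 — 6 statements merged into one kernel-verified Lean document; each statement's English description precedes it below -/
import Mathlib

section
/- Let (Ω, μ) be a probability space, let A, Â : Ω → Bool be measurable, let S be a countable type with the discrete measurable structure, let Z : Ω → S be measurable, and let f : S → Bool. Assume: (positivity) for every a, â ∈ Bool, μ{ω | A ω = a} > 0, μ{ω | Â ω = â} > 0, and μ{ω | Â ω = â ∧ A ω = a} > 0; (conditional independence) for every â ∈ Bool, z ∈ S, a ∈ Bool, μ[{ω | Â ω = â ∧ Z ω = z} | {ω | A ω = a}] = μ[{ω | Â ω = â} | {ω | A ω = a}] · μ[{ω | Z ω = z} | {ω | A ω = a}]; (non-randomness of the estimate) μ[{ω | A ω = true} | {ω | Â ω = true}] ≠ μ[{ω | A ω = true} | {ω | Â ω = false}]; (global optimum of the adversarial objective) for every z ∈ S, μ[{ω | Z ω = z} | {ω | Â ω = true}] = μ[{ω | Z ω = z} | {ω | Â ω = false}]. Then the prediction Ŷ = f ∘ Z satisfies demographic parity with respect to the true sensitive attribute A: for every y ∈ Bool, μ[{ω | f (Z ω) = y} | {ω | A ω = true}] = μ[{ω | f (Z ω) = y} | {ω | A ω =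 false}]. -/
open MeasureTheory ProbabilityTheory Set

private lemma cond_toReal_aux {Ω : Type*} [MeasurableSpace Ω] (μ : Measure Ω) {s : Set Ω}
    (hs : MeasurableSet s) (t : Set Ω) :
    (μ[t|s]).toReal = (μ (s ∩ t)).toReal / (μ s).toReal := by
  rw [cond_apply hs, ENNReal.toReal_mul, ENNReal.toReal_inv, inv_mul_eq_div]

private lemma cond_ne_top_aux {Ω : Type*} [MeasurableSpace Ω] (μ : Measure Ω)
    [IsFiniteMeasure μ] {s : Set Ω} (hs : MeasurableSet s) (hs0 : μ s ≠ 0) (t : Set Ω) :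
    μ[t|s] ≠ ⊤ := by
  rw [cond_apply hs]
  exact ENNReal.mul_ne_top (ENNReal.inv_ne_top.mpr hs0) (measure_ne_top μ _)

/-- Theorem 1 of the paper (fairness guarantee of FairDA): under positivity,
conditional independence of the estimated sensitive attribute `Ahat` and the
representation `Z` given the true sensitive attribute `A`, non-randomness of
the estimate, and parity of the representation given the estimate, the
prediction `Ŷ = f ∘ Z` satisfies demographic parity w.r.t. `A`. -/
theorem fairda_demographic_parity
    {Ω : Type*} [MeasurableSpace Ω] (μ : Measure Ω) [IsProbabilityMeasure μ]
    {S : Type*} [MeasurableSpace S] [MeasurableSingletonClass S] [Countable S]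
    (A Ahat : Ω → Bool) (hA : Measurable A) (hAhat : Measurable Ahat)
    (Z : Ω → S) (hZ : Measurable Z) (f : S → Bool)
    (hposA : ∀ a : Bool, 0 < μ {ω | A ω = a})
    (hposAhat : ∀ ahat : Bool, 0 < μ {ω | Ahat ω = ahat})
    (hposAhatA : ∀ ahat a : Bool, 0 < μ {ω | Ahat ω = ahat ∧ A ω = a})
    (hCI : ∀ (ahat : Bool) (z : S) (a : Bool),
      μ[{ω | Ahat ω = ahat ∧ Z ω = z} | {ω | A ω = a}]
        = μ[{ω | Ahat ω = ahat} | {ω | A ω = a}] * μ[{ω | Z ω = z} | {ω | A ω = a}])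
    (hNR : μ[{ω | A ω = true} | {ω | Ahat ω = true}]
        ≠ μ[{ω | A ω = true} | {ω | Ahat ω = false}])
    (hOpt : ∀ z : S,
      μ[{ω | Z ω = z} | {ω | Ahat ω = true}] = μ[{ω | Z ω = z} | {ω | Ahat ω = false}]) :
    ∀ y : Bool,
      μ[{ω | f (Z ω) = y} | {ω | A ω = true}]
        = μ[{ω | f (Z ω) = y} | {ω | A ω = false}] := by
  -- basic measurability facts
  have mA : ∀ a : Bool, MeasurableSet {ω | A ω = a} := fun a => hA (measurableSet_singleton a)
  have mH : ∀ b : Bool, MeasurableSet {ω | Ahat ω = b} :=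
    fun b => hAhat (measurableSet_singleton b)
  have mZ : ∀ z : S, MeasurableSet {ω | Z ω = z} := fun z => hZ (measurableSet_singleton z)
  set sA : Bool → Set Ω := fun a => {ω | A ω = a} with hsAdef
  set sH : Bool → Set Ω := fun b => {ω | Ahat ω = b} with hsHdef
  set sZ : S → Set Ω := fun z => {ω | Z ω = z} with hsZdef
  have hAnd : ∀ (b a : Bool), {ω | Ahat ω = b ∧ A ω = a} = sH b ∩ sA a := fun _ _ => rfl
  have hAndZ : ∀ (b : Bool) (z : S), {ω | Ahat ω = b ∧ Z ω = z} = sH b ∩ sZ z := fun _ _ => rfl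
  -- splitting by the value of A
  have hsplit : ∀ E : Set Ω, μ E = μ (sA true ∩ E) + μ (sA false ∩ E) := by
    intro E
    have hdiff : E \ sA true = E ∩ sA false := by
      ext ω; simp [sA, Bool.not_eq_true, Set.mem_diff]
    have := measure_inter_add_diff (μ := μ) E (mA true)
    rw [hdiff, Set.inter_comm E (sA true), Set.inter_comm E (sA false)] at this
    exact this.symm
  -- real positivity
  have nApos : ∀ a, 0 < (μ (sA a)).toReal :=
    fun a => ENNReal.toReal_pos (hposA a).ne' (measure_ne_top μ _)
  have nHpos : ∀ b, 0 < (μ (sH b)).toReal :=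
    fun b => ENNReal.toReal_pos (hposAhat b).ne' (measure_ne_top μ _)
  -- Step A : conditional independence in product form (real numbers)
  have keyA : ∀ (b : Bool) (z : S) (a : Bool),
      (μ (sA a ∩ (sH b ∩ sZ z))).toReal
        = (μ (sA a ∩ sH b)).toReal * (μ (sA a ∩ sZ z)).toReal / (μ (sA a)).toReal := by
    intro b z a
    have hn := (nApos a).ne'
    have h := congrArg ENNReal.toReal (hCI b z a)
    rw [hAndZ, ENNReal.toReal_mul, cond_toReal_aux μ (mA a), cond_toReal_aux μ (mA a),
      cond_toReal_aux μ (mA a), div_mul_div_comm] at h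
    have h2 := (div_eq_div_iff hn (mul_ne_zero hn hn)).mp h
    have h3 : ((μ (sA a ∩ (sH b ∩ sZ z))).toReal * (μ (sA a)).toReal) * (μ (sA a)).toReal
        = ((μ (sA a ∩ sH b)).toReal * (μ (sA a ∩ sZ z)).toReal) * (μ (sA a)).toReal := by
      linear_combination h2
    have h4 := mul_right_cancel₀ hn h3
    rw [eq_div_iff hn]
    exact h4
  -- Step B : law of total probability for μ (sH b ∩ sZ z), in real form
  have keyB : ∀ (b : Bool) (z : S),
      (μ (sH b ∩ sZ z)).toReal
        = (μ (sA true ∩ sH b)).toReal * (μ (sA true ∩ sZ z)).toReal / (μ (sA true)).toReal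
        + (μ (sA false ∩ sH b)).toReal * (μ (sA false ∩ sZ z)).toReal / (μ (sA false)).toReal := by
    intro b z
    have h := congrArg ENNReal.toReal (hsplit (sH b ∩ sZ z))
    rw [ENNReal.toReal_add (measure_ne_top μ _) (measure_ne_top μ _)] at h
    rw [h, keyA b z true, keyA b z false]
  -- totals : μ (sH b) = μ (sA true ∩ sH b) + μ (sA false ∩ sH b)
  have keyT : ∀ b : Bool, (μ (sH b)).toReal
      = (μ (sA true ∩ sH b)).toReal + (μ (sA false ∩ sH b)).toReal := by
    intro b
    have h := congrArg ENNReal.toReal (hsplit (sH b))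
    rwa [ENNReal.toReal_add (measure_ne_top μ _) (measure_ne_top μ _)] at h
  -- the key pointwise identity
  have hKey : ∀ z : S, μ[sZ z | sA true] = μ[sZ z | sA false] := by
    intro z
    set vTT := (μ (sA true ∩ sH true)).toReal with hvTT
    set vFT := (μ (sA false ∩ sH true)).toReal with hvFT
    set vTF := (μ (sA true ∩ sH false)).toReal with hvTF
    set vFF := (μ (sA false ∩ sH false)).toReal with hvFF
    set nT := (μ (sA true)).toReal with hnT
    set nF := (μ (sA false)).toReal with hnF
    set x := (μ (sA true ∩ sZ z)).toReal / nT with hx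
    set yv := (μ (sA false ∩ sZ z)).toReal / nF with hyv
    set bT := (μ (sH true)).toReal with hbTd
    set bF := (μ (sH false)).toReal with hbFd
    have hbTpos : 0 < bT := nHpos true
    have hbFpos : 0 < bF := nHpos false
    have hnTpos : 0 < nT := nApos true
    have hnFpos : 0 < nF := nApos false
    -- hOpt in real form
    have hO := congrArg ENNReal.toReal (hOpt z)
    rw [cond_toReal_aux μ (mH true), cond_toReal_aux μ (mH false), keyB true z, keyB false z] at hO
    have hO' : (vTT * x + vFT * yv) / bT = (vTF * x + vFF * yv) / bF := by
      rw [hx, hyv, ← mul_div_assoc, ← mul_div_assoc, ← mul_div_assoc, ← mul_div_assoc]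
      exact hO
    -- hNR in real form
    have hNR' : vTT / bT ≠ vTF / bF := by
      intro hcontra
      apply hNR
      have h1 : (μ[{ω | A ω = true} | {ω | Ahat ω = true}]).toReal = vTT / bT := by
        rw [cond_toReal_aux μ (mH true), Set.inter_comm]
      have h2 : (μ[{ω | A ω = true} | {ω | Ahat ω = false}]).toReal = vTF / bF := by
        rw [cond_toReal_aux μ (mH false), Set.inter_comm]
      exact (ENNReal.toReal_eq_toReal_iff'
        (cond_ne_top_aux μ (mH true) (hposAhat true).ne' _)
        (cond_ne_top_aux μ (mH false) (hposAhat false).ne' _)).mp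
        (by rw [h1, h2, hcontra])
    have hbT : bT = vTT + vFT := keyT true
    have hbF : bF = vTF + vFF := keyT false
    have hcleared : (vTT * x + vFT * yv) * bF = (vTF * x + vFF * yv) * bT :=
      (div_eq_div_iff hbTpos.ne' hbFpos.ne').mp hO'
    have hne : vTT * bF ≠ vTF * bT := by
      intro hcontra
      exact hNR' ((div_eq_div_iff hbTpos.ne' hbFpos.ne').mpr hcontra)
    rw [hbT, hbF] at hcleared hne
    have hfac : (vTT * vFF - vTF * vFT) * (x - yv) = 0 := by linear_combination hcleared
    have hfacne : vTT * vFF - vTF * vFT ≠ 0 := fun hcontra => hne (by linear_combination hcontra)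
    have hxy : x = yv := by
      rcases mul_eq_zero.mp hfac with h | h
      · exact absurd h hfacne
      · linarith [sub_eq_zero.mp h]
    -- back to ENNReal
    refine (ENNReal.toReal_eq_toReal_iff'
      (cond_ne_top_aux μ (mA true) (hposA true).ne' _)
      (cond_ne_top_aux μ (mA false) (hposA false).ne' _)).mp ?_
    rw [cond_toReal_aux μ (mA true), cond_toReal_aux μ (mA false)]
    exact hxy
  -- conclude by summing over z with f z = y
  intro y
  have hset : {ω | f (Z ω) = y} = ⋃ z ∈ f ⁻¹' {y}, sZ z := by
    ext ω
    constructor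
    · intro h
      exact Set.mem_biUnion (show Z ω ∈ f ⁻¹' {y} from h) (show Z ω = Z ω from rfl)
    · intro h
      rcases Set.mem_iUnion₂.mp h with ⟨z, hz, hω⟩
      have e1 : Z ω = z := hω
      show f (Z ω) = y
      rw [e1]
      exact hz
  have hcount : (f ⁻¹' {y} : Set S).Countable := Set.to_countable _
  have hdisj : (f ⁻¹' {y} : Set S).PairwiseDisjoint sZ := by
    intro z1 _ z2 _ hne
    refine Set.disjoint_left.mpr fun ω h1 h2 => hne ?_
    have e1 : Z ω = z1 := h1
    have e2 : Z ω = z2 := h2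
    rw [← e1, e2]
  have hm : ∀ z ∈ f ⁻¹' {y}, MeasurableSet (sZ z) := fun z _ => mZ z
  have h1 : μ[{ω | f (Z ω) = y} | sA true]
      = ∑' z : ↥(f ⁻¹' {y}), μ[sZ z.1 | sA true] := by
    rw [hset]; exact measure_biUnion hcount hdisj hm
  have h2 : μ[{ω | f (Z ω) = y} | sA false]
      = ∑' z : ↥(f ⁻¹' {y}), μ[sZ z.1 | sA false] := by
    rw [hset]; exact measure_biUnion hcount hdisj hm
  rw [h1, h2]
  exact tsum_congr fun z => hKey z.1
end

section
/- Let (Ω, μ) be a probability space, let A, Â : Ω → Bool be measurable, let S be a countable type with the discrete measurable structure, and let Z : Ω → S be measurable. Assume: (positivity) for every a, â ∈ Bool, μ{ω | A ω = a} > 0, μ{ω | Â ω = â} > 0, and μ{ω | Â ω = â ∧ A ω = a} > 0; (conditional independence) for every â ∈ Bool, z ∈ S, a ∈ Bool, μ[{ω | Â ω = â ∧ Z ω = z} | {ω | A ω = a}] = μ[{ω | Â ω = â} | {ω | A ω = a}] · μ[{ω | Z ω = z} | {ω | A ω = a}]; (non-randomness) μ[{ω | A ω = true} | {ω | Â ω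 = true}] ≠ μ[{ω | A ω = true} | {ω | Â ω = false}]; (representation parity given the estimate) for every z ∈ S, μ[{ω | Z ω = z} | {ω | Â ω = true}] = μ[{ω | Z ω = z} | {ω | Â ω = false}]. Then the representation satisfies parity with respect to the true sensitive attribute: for every z ∈ S, μ[{ω | Z ω = z} | {ω | A ω = true}] = μ[{ω | Z ω = z} | {ω | A ω = false}]. -/
open MeasureTheory ProbabilityTheory
open scoped ENNReal NNReal

/-!
Conditioning on `Â = â` and splitting along `A`, conditional independence of `Â` and `Z` given
`A` makes the law of `Z` given `Â = â` the mixture `r_â • P_true + (1 - r_â) • P_false` of the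
laws `P_a` of `Z` given `A = a`, with weights `r_â = μ[A = true | Â = â]`. Parity given `Â`
equates the two mixtures, so `(r_true - r_false) • (P_true - P_false) = 0`, and
non-randomness `r_true ≠ r_false` forces `P_true = P_false`.
-/

theorem eq_of_mul_add_one_sub_mul_eq {R : Type*} [CommRing R] [NoZeroDivisors R]
    {r r' x y : R} (hrr' : r ≠ r') (h : r * x + (1 - r) * y = r' * x + (1 - r') * y) :
    x = y := by
  have key : (r - r') * (x - y) = 0 := by linear_combination h
  exact sub_eq_zero.mp ((mul_eq_zero.mp key).resolve_left (sub_ne_zero.mpr hrr'))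

theorem ENNReal.eq_of_mul_add_one_sub_mul_eq {r r' x y : ℝ≥0∞} (hr : r ≤ 1) (hr' : r' ≤ 1)
    (hx : x ≠ ∞) (hy : y ≠ ∞) (hrr' : r ≠ r')
    (h : r * x + (1 - r) * y = r' * x + (1 - r') * y) : x = y := by
  lift r to ℝ≥0 using ne_top_of_le_ne_top one_ne_top hr
  lift r' to ℝ≥0 using ne_top_of_le_ne_top one_ne_top hr'
  lift x to ℝ≥0 using hx
  lift y to ℝ≥0 using hy
  norm_cast at hr hr' hrr' h ⊢
  have h_real := congrArg NNReal.toReal h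
  push_cast [NNReal.coe_sub hr, NNReal.coe_sub hr'] at h_real
  exact NNReal.coe_injective
    (_root_.eq_of_mul_add_one_sub_mul_eq (NNReal.coe_injective.ne hrr') h_real)

theorem cond_eq_cond_mul_add_cond_compl_mul {Ω : Type*} [MeasurableSpace Ω] {μ : Measure Ω}
    [IsFiniteMeasure μ] {s B C : Set Ω} (hs : MeasurableSet s) (hB : MeasurableSet B)
    (hindep : μ[B ∩ C | s] = μ[B | s] * μ[C | s])
    (hindep_compl : μ[B ∩ C | sᶜ] = μ[B | sᶜ] * μ[C | sᶜ]) :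
    μ[C | B] = μ[s | B] * μ[C | s] + μ[sᶜ | B] * μ[C | sᶜ] := by
  have total : μ (B ∩ C) = μ (s ∩ B) * μ[C | s] + μ (sᶜ ∩ B) * μ[C | sᶜ] := by
    rw [← cond_add_cond_compl_eq hs μ, hindep, hindep_compl, ← cond_mul_eq_inter hs,
      ← cond_mul_eq_inter hs.compl]
    ring
  rw [cond_apply hB, cond_apply hB, cond_apply hB, total, Set.inter_comm B s,
    Set.inter_comm B sᶜ, mul_add, mul_assoc, mul_assoc]

theorem cond_eq_cond_mul_add_one_sub_cond_mul {Ω : Type*} [MeasurableSpace Ω] {μ : Measure Ω}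
    [IsFiniteMeasure μ] {s B C : Set Ω} (hs : MeasurableSet s) (hB : MeasurableSet B)
    (hB₀ : μ B ≠ 0) (hindep : μ[B ∩ C | s] = μ[B | s] * μ[C | s])
    (hindep_compl : μ[B ∩ C | sᶜ] = μ[B | sᶜ] * μ[C | sᶜ]) :
    μ[C | B] = μ[s | B] * μ[C | s] + (1 - μ[s | B]) * μ[C | sᶜ] := by
  have := cond_isProbabilityMeasure (μ := μ) hB₀
  rw [← prob_compl_eq_one_sub hs]
  exact cond_eq_cond_mul_add_cond_compl_mul hs hB hindep hindep_compl

theorem fairda_representation_parity_general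
    {Ω : Type*} [MeasurableSpace Ω] (μ : Measure Ω) [IsProbabilityMeasure μ]
    {S : Type*}
    (A Ahat : Ω → Bool) (hA : Measurable A) (hAhat : Measurable Ahat)
    (Z : Ω → S)
    (hposAhat : ∀ ahat : Bool, 0 < μ {ω | Ahat ω = ahat})
    (hCI : ∀ (ahat : Bool) (z : S) (a : Bool),
      μ[{ω | Ahat ω = ahat ∧ Z ω = z} | {ω | A ω = a}]
        = μ[{ω | Ahat ω = ahat} | {ω | A ω = a}] * μ[{ω | Z ω = z} | {ω | A ω = a}])
    (hNR : μ[{ω | A ω = true} | {ω | Ahat ω = true}]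
        ≠ μ[{ω | A ω = true} | {ω | Ahat ω = false}])
    (hOpt : ∀ z : S,
      μ[{ω | Z ω = z} | {ω | Ahat ω = true}] = μ[{ω | Z ω = z} | {ω | Ahat ω = false}]) :
    ∀ z : S,
      μ[{ω | Z ω = z} | {ω | A ω = true}] = μ[{ω | Z ω = z} | {ω | A ω = false}] := by
  intro z
  have hA_true : MeasurableSet {ω | A ω = true} := hA (measurableSet_singleton true)
  have hA_compl : {ω | A ω = true}ᶜ = {ω | A ω = false} := by ext; simp
  have mixture (ahat : Bool) :
      μ[{ω | Z ω = z} | {ω | Ahat ω = ahat}]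
        = μ[{ω | A ω = true} | {ω | Ahat ω = ahat}] * μ[{ω | Z ω = z} | {ω | A ω = true}]
          + (1 - μ[{ω | A ω = true} | {ω | Ahat ω = ahat}])
            * μ[{ω | Z ω = z} | {ω | A ω = false}] := by
    rw [← hA_compl]
    refine cond_eq_cond_mul_add_one_sub_cond_mul hA_true
      (hAhat (measurableSet_singleton ahat)) (hposAhat ahat).ne' (hCI ahat z true) ?_
    rw [hA_compl]
    exact hCI ahat z false
  have := cond_isProbabilityMeasure (μ := μ) (hposAhat true).ne'
  have := cond_isProbabilityMeasure (μ := μ) (hposAhat false).ne'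
  exact ENNReal.eq_of_mul_add_one_sub_mul_eq prob_le_one prob_le_one (measure_ne_top _ _)
    (measure_ne_top _ _) hNR ((mixture true).symm.trans ((hOpt z).trans (mixture false)))

/-- Key intermediate step in Theorem 1 of the paper: parity of the learned
representation `Z` with respect to the true sensitive attribute `A`. -/
theorem fairda_representation_parity
    {Ω : Type*} [MeasurableSpace Ω] (μ : Measure Ω) [IsProbabilityMeasure μ]
    {S : Type*} [MeasurableSpace S] [MeasurableSingletonClass S] [Countable S]
    (A Ahat : Ω → Bool) (hA : Measurable A) (hAhat : Measurable Ahat)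
    (Z : Ω → S) (hZ : Measurable Z)
    (hposA : ∀ a : Bool, 0 < μ {ω | A ω = a})
    (hposAhat : ∀ ahat : Bool, 0 < μ {ω | Ahat ω = ahat})
    (hposAhatA : ∀ ahat a : Bool, 0 < μ {ω | Ahat ω = ahat ∧ A ω = a})
    (hCI : ∀ (ahat : Bool) (z : S) (a : Bool),
      μ[{ω | Ahat ω = ahat ∧ Z ω = z} | {ω | A ω = a}]
        = μ[{ω | Ahat ω = ahat} | {ω | A ω = a}] * μ[{ω | Z ω = z} | {ω | A ω = a}])
    (hNR : μ[{ω | A ω = true} | {ω | Ahat ω = true}]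
        ≠ μ[{ω | A ω = true} | {ω | Ahat ω = false}])
    (hOpt : ∀ z : S,
      μ[{ω | Z ω = z} | {ω | Ahat ω = true}] = μ[{ω | Z ω = z} | {ω | Ahat ω = false}]) :
    ∀ z : S,
      μ[{ω | Z ω = z} | {ω | A ω = true}] = μ[{ω | Z ω = z} | {ω | A ω = false}] :=
  fairda_representation_parity_general μ A Ahat hA hAhat Z hposAhat hCI hNR hOpt
end

section
/- Let (Ω, μ) be a probability space, let A, Â : Ω → Bool be measurable, let S be a countable type with the discrete measurable structure, and let Z : Ω → S be measurable. Assume: for every a, â ∈ Bool, μ{ω | A ω = a} > 0, μ{ω | Â ω = â} > 0, and μ{ω | Â ω = â ∧ A ω = a} > 0; for every â ∈ Bool, z ∈ S, a ∈ Bool, μ[{ω | Â ω = â ∧ Z ω = z} | {ω | A ω = a}] = μ[{ω | Â ω = â} | {ω | A ω = a}] · μ[{ω | Z ω = z} | {ω | A ω = a}]; and for every z ∈ S, μ[{ω | Z ω = z} | {ω | Â ω = true}] = μ[{ω | Z ω = z} | {ω | Â ω = false}]. Then for every z ∈ S, μ[{ω | Z ω = z} | {ω | A ω = true}] · (μ[{ω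 | A ω = true} | {ω | Â ω = true}] − μ[{ω | A ω = true} | {ω | Â ω = false}]) = μ[{ω | Z ω = z} | {ω | A ω = false}] · (μ[{ω | A ω = false} | {ω | Â ω = false}] − μ[{ω | A ω = false} | {ω | Â ω = true}]), where the differences are taken in the real numbers (conditional probabilities regarded as reals). -/
open MeasureTheory ProbabilityTheory

/-! Conditional independence of `Ahat` and `Z` given `A` turns the law of total probability over
the fibres of `A` into the mixture `p(Z | Ahat = â) = ∑ a, p(A = a | Ahat = â) p(Z | A = a)`.
Equating the mixtures for `â = true` and `â = false` and collecting the coefficients of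
`p(Z | A = true)` and `p(Z | A = false)` gives the identity. -/

namespace ProbabilityTheory

variable {Ω α : Type*} [MeasurableSpace Ω] {μ : Measure Ω} [IsFiniteMeasure μ] {s t : Set Ω}

theorem measure_inter_inter_eq_measure_inter_mul_cond {r : Set Ω} (hr : MeasurableSet r)
    (hst : μ[s ∩ t | r] = μ[s | r] * μ[t | r]) : μ (r ∩ (s ∩ t)) = μ (r ∩ s) * μ[t | r] := by
  rw [← cond_mul_eq_inter hr, ← cond_mul_eq_inter hr, hst, mul_right_comm]

variable [Fintype α] [MeasurableSpace α] [DiscreteMeasurableSpace α]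

theorem cond_eq_sum_cond_mul_cond {X : Ω → α} (hX : Measurable X) (hs : MeasurableSet s)
    (hst : ∀ x, μ[s ∩ t | X ← x] = μ[s | X ← x] * μ[t | X ← x]) :
    μ[t | s] = ∑ x, μ[X ⁻¹' {x} | s] * μ[t | X ← x] := by
  have total : μ (s ∩ t) = ∑ x, μ (X ⁻¹' {x} ∩ s) * μ[t | X ← x] := by
    conv_lhs => rw [← sum_meas_smul_cond_fiber hX μ]
    simp only [Measure.coe_finsetSum, Measure.coe_smul, Finset.sum_apply, Pi.smul_apply,
      smul_eq_mul]
    refine Finset.sum_congr rfl fun x _ => ?_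
    rw [mul_comm, cond_mul_eq_inter (hX (.singleton x)),
      measure_inter_inter_eq_measure_inter_mul_cond (hX (.singleton x)) (hst x)]
  rw [cond_apply hs, total, Finset.mul_sum]
  refine Finset.sum_congr rfl fun x _ => ?_
  rw [cond_apply hs, Set.inter_comm s, mul_assoc]

theorem toReal_cond_eq_sum_cond_mul_cond {X : Ω → α} (hX : Measurable X) (hs : MeasurableSet s)
    (hst : ∀ x, μ[s ∩ t | X ← x] = μ[s | X ← x] * μ[t | X ← x]) :
    (μ[t | s]).toReal = ∑ x, (μ[X ⁻¹' {x} | s]).toReal * (μ[t | X ← x]).toReal := by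
  rw [cond_eq_sum_cond_mul_cond hX hs hst, ENNReal.toReal_sum fun x _ =>
    ENNReal.mul_ne_top (measure_ne_top _ _) (measure_ne_top _ _)]
  simp only [ENNReal.toReal_mul]

end ProbabilityTheory

theorem fairda_equation_ten_general
    {Ω : Type*} [MeasurableSpace Ω] (μ : Measure Ω) [IsProbabilityMeasure μ]
    {S : Type*}
    (A Ahat : Ω → Bool) (hA : Measurable A) (hAhat : Measurable Ahat)
    (Z : Ω → S)
    (hCI : ∀ (ahat : Bool) (z : S) (a : Bool),
      μ[{ω | Ahat ω = ahat ∧ Z ω = z} | {ω | A ω = a}]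
        = μ[{ω | Ahat ω = ahat} | {ω | A ω = a}] * μ[{ω | Z ω = z} | {ω | A ω = a}])
    (hOpt : ∀ z : S,
      μ[{ω | Z ω = z} | {ω | Ahat ω = true}] = μ[{ω | Z ω = z} | {ω | Ahat ω = false}]) :
    ∀ z : S,
      (μ[{ω | Z ω = z} | {ω | A ω = true}]).toReal
          * ((μ[{ω | A ω = true} | {ω | Ahat ω = true}]).toReal
              - (μ[{ω | A ω = true} | {ω | Ahat ω = false}]).toReal)
        = (μ[{ω | Z ω = z} | {ω | A ω = false}]).toReal
          * ((μ[{ω | A ω = false} | {ω | Ahat ω = false}]).toReal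
              - (μ[{ω | A ω = false} | {ω | Ahat ω = true}]).toReal) := by
  intro z
  have mixture (ahat : Bool) : (μ[{ω | Z ω = z} | {ω | Ahat ω = ahat}]).toReal
      = ∑ a, (μ[{ω | A ω = a} | {ω | Ahat ω = ahat}]).toReal
          * (μ[{ω | Z ω = z} | {ω | A ω = a}]).toReal :=
    toReal_cond_eq_sum_cond_mul_cond hA (hAhat (.singleton ahat)) (hCI ahat z)
  have hOpt_real := congrArg ENNReal.toReal (hOpt z)
  rw [mixture, mixture, Fintype.sum_bool, Fintype.sum_bool] at hOpt_real
  linear_combination hOpt_real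

/-- Equation (10) in the proof of Theorem 1 of the paper: equating the mixture
decompositions of `p(Z | Ahat = 1)` and `p(Z | Ahat = 0)` over the true sensitive
attribute `A` yields this identity (differences taken in the real numbers). -/
theorem fairda_equation_ten
    {Ω : Type*} [MeasurableSpace Ω] (μ : Measure Ω) [IsProbabilityMeasure μ]
    {S : Type*} [MeasurableSpace S] [MeasurableSingletonClass S] [Countable S]
    (A Ahat : Ω → Bool) (hA : Measurable A) (hAhat : Measurable Ahat)
    (Z : Ω → S) (hZ : Measurable Z)
    (hposA : ∀ a : Bool, 0 < μ {ω | A ω = a})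
    (hposAhat : ∀ ahat : Bool, 0 < μ {ω | Ahat ω = ahat})
    (hposAhatA : ∀ ahat a : Bool, 0 < μ {ω | Ahat ω = ahat ∧ A ω = a})
    (hCI : ∀ (ahat : Bool) (z : S) (a : Bool),
      μ[{ω | Ahat ω = ahat ∧ Z ω = z} | {ω | A ω = a}]
        = μ[{ω | Ahat ω = ahat} | {ω | A ω = a}] * μ[{ω | Z ω = z} | {ω | A ω = a}])
    (hOpt : ∀ z : S,
      μ[{ω | Z ω = z} | {ω | Ahat ω = true}] = μ[{ω | Z ω = z} | {ω | Ahat ω = false}]) :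
    ∀ z : S,
      (μ[{ω | Z ω = z} | {ω | A ω = true}]).toReal
          * ((μ[{ω | A ω = true} | {ω | Ahat ω = true}]).toReal
              - (μ[{ω | A ω = true} | {ω | Ahat ω = false}]).toReal)
        = (μ[{ω | Z ω = z} | {ω | A ω = false}]).toReal
          * ((μ[{ω | A ω = false} | {ω | Ahat ω = false}]).toReal
              - (μ[{ω | A ω = false} | {ω | Ahat ω = true}]).toReal) :=
  fairda_equation_ten_general μ A Ahat hA hAhat Z hCI hOpt
end

section
/- Let a, b : ℝ with 0 < a and 0 < b, and let y : ℝ with 0 < y and y < 1. Then a · Real.log y + b · Real.log (1 − y) ≤ a · Real.log (a / (a + b)) + b · Real.log (b / (a + b)), with equality if and only if y = a / (a + b). -/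
/-!
Normalising the weights by `p = a / (a + b)` turns the objective into `(a + b)` times the
expected log-likelihood `p log y + (1 - p) log (1 - y)` of a Bernoulli(`y`) model under
Bernoulli(`p`) data. That this is maximised exactly at `y = p` is the two-point Gibbs inequality:
termwise, `log t ≤ t - 1` (strict for `t ≠ 1`) gives `p log (y / p) ≤ y - p` and
`(1 - p) log ((1 - y) / (1 - p)) ≤ p - y`, and the right-hand sides cancel.
-/

open Real

noncomputable def bernoulliLogLik (p y : ℝ) : ℝ := p * log y + (1 - p) * log (1 - y)

lemma mul_log_div_le_sub {p y : ℝ} (hp : 0 < p) (hy : 0 < y) : p * log (y / p) ≤ y - p :=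
  calc p * log (y / p) ≤ p * (y / p - 1) :=
        mul_le_mul_of_nonneg_left (log_le_sub_one_of_pos (div_pos hy hp)) hp.le
    _ = y - p := by field_simp

lemma mul_log_div_lt_sub {p y : ℝ} (hp : 0 < p) (hy : 0 < y) (hyp : y ≠ p) :
    p * log (y / p) < y - p :=
  calc p * log (y / p) < p * (y / p - 1) := by
        refine mul_lt_mul_of_pos_left (log_lt_sub_one_of_pos (div_pos hy hp) ?_) hp
        rwa [Ne, div_eq_one_iff_eq hp.ne']
    _ = y - p := by field_simp

section bernoulliLogLik

variable {p y : ℝ}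

lemma bernoulliLogLik_sub_self (hp0 : 0 < p) (hp1 : p < 1) (hy0 : 0 < y) (hy1 : y < 1) :
    bernoulliLogLik p y - bernoulliLogLik p p
      = p * log (y / p) + (1 - p) * log ((1 - y) / (1 - p)) := by
  rw [bernoulliLogLik, bernoulliLogLik, log_div hy0.ne' hp0.ne',
    log_div (sub_pos.2 hy1).ne' (sub_pos.2 hp1).ne']
  ring

lemma bernoulliLogLik_le (hp0 : 0 < p) (hp1 : p < 1) (hy0 : 0 < y) (hy1 : y < 1) :
    bernoulliLogLik p y ≤ bernoulliLogLik p p := by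
  have h := bernoulliLogLik_sub_self hp0 hp1 hy0 hy1
  linarith [mul_log_div_le_sub hp0 hy0, mul_log_div_le_sub (sub_pos.2 hp1) (sub_pos.2 hy1)]

lemma bernoulliLogLik_lt (hp0 : 0 < p) (hp1 : p < 1) (hy0 : 0 < y) (hy1 : y < 1)
    (hyp : y ≠ p) : bernoulliLogLik p y < bernoulliLogLik p p := by
  have h := bernoulliLogLik_sub_self hp0 hp1 hy0 hy1
  linarith [mul_log_div_lt_sub hp0 hy0 hyp, mul_log_div_le_sub (sub_pos.2 hp1) (sub_pos.2 hy1)]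

lemma bernoulliLogLik_eq_self_iff (hp0 : 0 < p) (hp1 : p < 1) (hy0 : 0 < y) (hy1 : y < 1) :
    bernoulliLogLik p y = bernoulliLogLik p p ↔ y = p := by
  refine ⟨fun h => ?_, fun h => h ▸ rfl⟩
  by_contra hyp
  exact (bernoulliLogLik_lt hp0 hp1 hy0 hy1 hyp).ne h

end bernoulliLogLik

/-- Pointwise form of Proposition 1 of Goodfellow et al.'s GAN paper: for fixed
positive weights `a` and `b`, the function `y ↦ a·log y + b·log (1 - y)` on
`(0, 1)` is uniquely maximized at `y = a / (a + b)`. -/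
theorem gan_optimal_discriminator_pointwise
    (a b : ℝ) (ha : 0 < a) (hb : 0 < b)
    (y : ℝ) (hy0 : 0 < y) (hy1 : y < 1) :
    a * Real.log y + b * Real.log (1 - y)
        ≤ a * Real.log (a / (a + b)) + b * Real.log (b / (a + b))
      ∧ (a * Real.log y + b * Real.log (1 - y)
          = a * Real.log (a / (a + b)) + b * Real.log (b / (a + b))
        ↔ y = a / (a + b)) := by
  have hs : 0 < a + b := add_pos ha hb
  set p := a / (a + b) with hp
  have hp0 : 0 < p := div_pos ha hs
  have hp1 : p < 1 := (div_lt_one hs).2 (lt_add_of_pos_right a hb)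
  have hq : 1 - p = b / (a + b) := by rw [hp]; field_simp; ring
  have hscale : ∀ z, a * log z + b * log (1 - z) = (a + b) * bernoulliLogLik p z := by
    intro z
    rw [bernoulliLogLik, mul_add, ← mul_assoc, ← mul_assoc, hq, hp,
      mul_div_cancel₀ _ hs.ne', mul_div_cancel₀ _ hs.ne']
  rw [← hq, hscale y, hscale p]
  exact ⟨mul_le_mul_of_nonneg_left (bernoulliLogLik_le hp0 hp1 hy0 hy1) hs.le,
    (mul_right_inj' hs.ne').trans (bernoulliLogLik_eq_self_iff hp0 hp1 hy0 hy1)⟩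
end

section
/- Let S be a nonempty finite type, let p, q : S → ℝ with 0 < p z and 0 < q z for all z ∈ S, and let D : S → ℝ with 0 < D z and D z < 1 for all z ∈ S. Then ∑_{z ∈ S} (p z · Real.log (D z) + q z · Real.log (1 − D z)) ≤ ∑_{z ∈ S} (p z · Real.log (p z / (p z + q z)) + q z · Real.log (q z / (p z + q z))). -/
open Finset

lemma pt_aux (a b x : ℝ) (ha : 0 < a) (hb : 0 < b) (h0 : 0 < x) (h1 : x < 1) :
    a * Real.log x + b * Real.log (1 - x)
      ≤ a * Real.log (a / (a + b)) + b * Real.log (b / (a + b)) := by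
  have hab : 0 < a + b := by linarith
  have h1x : 0 < 1 - x := by linarith
  have key1 : Real.log x - Real.log (a / (a + b)) ≤ x * (a + b) / a - 1 := by
    have := Real.log_le_sub_one_of_pos (show 0 < x * (a + b) / a by positivity)
    have heq : Real.log (x * (a + b) / a) = Real.log x - Real.log (a / (a + b)) := by
      rw [Real.log_div (by positivity) (by positivity),
        Real.log_div (by positivity) (by positivity),
        Real.log_mul (by positivity) (by positivity)]
      ring
    linarith [heq ▸ this]
  have key2 : Real.log (1 - x) - Real.log (b / (a + b)) ≤ (1 - x) * (a + b) / b - 1 := by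
    have := Real.log_le_sub_one_of_pos (show 0 < (1 - x) * (a + b) / b by positivity)
    have heq : Real.log ((1 - x) * (a + b) / b)
        = Real.log (1 - x) - Real.log (b / (a + b)) := by
      rw [Real.log_div (by positivity) (by positivity),
        Real.log_div (by positivity) (by positivity),
        Real.log_mul (by positivity) (by positivity)]
      ring
    linarith [heq ▸ this]
  have m1 : a * (Real.log x - Real.log (a / (a + b))) ≤ a * (x * (a + b) / a - 1) :=
    mul_le_mul_of_nonneg_left key1 ha.le
  have m2 : b * (Real.log (1 - x) - Real.log (b / (a + b))) ≤ b * ((1 - x) * (a + b) / b - 1) :=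
    mul_le_mul_of_nonneg_left key2 hb.le
  have e1 : a * (x * (a + b) / a - 1) = x * (a + b) - a := by field_simp
  have e2 : b * ((1 - x) * (a + b) / b - 1) = (1 - x) * (a + b) - b := by field_simp
  nlinarith [m1, m2]

/-- Global (summed) form of Proposition 1 of Goodfellow et al.: over
everywhere-positive densities `p` and `q` on a finite discrete space, the
adversary's objective `∑ p·log D + q·log (1 - D)` is maximized by the
discriminator `D*(z) = p z / (p z + q z)`. -/
theorem gan_optimal_discriminator_sum
    {S : Type*} [Fintype S] [Nonempty S]
    (p q : S → ℝ) (hp : ∀ z, 0 < p z) (hq : ∀ z, 0 < q z)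
    (D : S → ℝ) (hD0 : ∀ z, 0 < D z) (hD1 : ∀ z, D z < 1) :
    ∑ z : S, (p z * Real.log (D z) + q z * Real.log (1 - D z))
      ≤ ∑ z : S, (p z * Real.log (p z / (p z + q z))
          + q z * Real.log (q z / (p z + q z))) := by
  exact Finset.sum_le_sum fun z _ => pt_aux (p z) (q z) (D z) (hp z) (hq z) (hD0 z) (hD1 z)
end

section
/- Let S be a nonempty finite type, and let p, q : S → ℝ with 0 < p z and 0 < q z for all z ∈ S, ∑_{z ∈ S} p z = 1, and ∑_{z ∈ S} q z = 1. Then ∑_{z ∈ S} (p z · Real.log (p z / (p z + q z)) + q z · Real.log (q z / (p z + q z))) ≥ −2 · Real.log 2, with equality if and only if p = q. -/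
/-!
With `m = (p + q) / 2`, the criterion equals `KL(p ‖ m) + KL(q ‖ m) - 2 log 2`. Each
Kullback–Leibler term is a sum `∑ m klFun (p / m)` of nonnegative terms vanishing only where
`p = m`, so the criterion is at least `-2 log 2`, with equality iff `p = m = q`.
-/

open Finset Real InformationTheory

lemma mul_klFun_div_eq {a b : ℝ} (hb : b ≠ 0) :
    b * klFun (a / b) = a * log (a / b) + b - a := by
  rw [klFun_apply]
  field_simp

section Gibbs

variable {ι : Type*} {s : Finset ι} {p m : ι → ℝ}

lemma sum_mul_log_div_eq_sum_mul_klFun (hm : ∀ i ∈ s, m i ≠ 0)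
    (hsum : ∑ i ∈ s, p i = ∑ i ∈ s, m i) :
    ∑ i ∈ s, p i * log (p i / m i) = ∑ i ∈ s, m i * klFun (p i / m i) := by
  rw [sum_congr rfl fun i hi => mul_klFun_div_eq (a := p i) (hm i hi), sum_sub_distrib,
    sum_add_distrib, hsum, add_sub_cancel_right]

lemma sum_mul_log_div_nonneg (hp : ∀ i ∈ s, 0 ≤ p i) (hm : ∀ i ∈ s, 0 < m i)
    (hsum : ∑ i ∈ s, p i = ∑ i ∈ s, m i) :
    0 ≤ ∑ i ∈ s, p i * log (p i / m i) := by
  rw [sum_mul_log_div_eq_sum_mul_klFun (fun i hi => (hm i hi).ne') hsum]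
  exact sum_nonneg fun i hi =>
    mul_nonneg (hm i hi).le (klFun_nonneg (div_nonneg (hp i hi) (hm i hi).le))

lemma sum_mul_log_div_eq_zero_iff (hp : ∀ i ∈ s, 0 ≤ p i) (hm : ∀ i ∈ s, 0 < m i)
    (hsum : ∑ i ∈ s, p i = ∑ i ∈ s, m i) :
    ∑ i ∈ s, p i * log (p i / m i) = 0 ↔ ∀ i ∈ s, p i = m i := by
  have hdiv : ∀ i ∈ s, 0 ≤ p i / m i := fun i hi => div_nonneg (hp i hi) (hm i hi).le
  rw [sum_mul_log_div_eq_sum_mul_klFun (fun i hi => (hm i hi).ne') hsum,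
    sum_eq_zero_iff_of_nonneg fun i hi => mul_nonneg (hm i hi).le (klFun_nonneg (hdiv i hi))]
  refine forall₂_congr fun i hi => ?_
  rw [mul_eq_zero, klFun_eq_zero_iff (hdiv i hi), div_eq_one_iff_eq (hm i hi).ne']
  simp [(hm i hi).ne']

end Gibbs

lemma mul_log_div_eq_mul_log_div_half_sub (a : ℝ) {c : ℝ} (hc : c ≠ 0) :
    a * log (a / c) = a * log (a / (c / 2)) - a * log 2 := by
  rcases eq_or_ne a 0 with rfl | ha
  · simp
  rw [← mul_sub, ← log_div (by positivity) two_ne_zero]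
  congr 2
  field_simp

theorem gan_global_optimum_general
    {S : Type*} [Fintype S]
    (p q : S → ℝ) (hp : ∀ z, 0 < p z) (hq : ∀ z, 0 < q z)
    (hp1 : ∑ z : S, p z = 1) (hq1 : ∑ z : S, q z = 1) :
    ∑ z : S, (p z * Real.log (p z / (p z + q z))
        + q z * Real.log (q z / (p z + q z)))
      ≥ -2 * Real.log 2
    ∧ (∑ z : S, (p z * Real.log (p z / (p z + q z))
          + q z * Real.log (q z / (p z + q z)))
        = -2 * Real.log 2 ↔ p = q) := by
  set m : S → ℝ := fun z => (p z + q z) / 2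
  have hm : ∀ z ∈ univ, 0 < m z := fun z _ => half_pos (add_pos (hp z) (hq z))
  have hm1 : ∑ z, m z = 1 := by
    simp only [m, ← sum_div, sum_add_distrib, hp1, hq1]; norm_num
  have hcrit : ∑ z, (p z * log (p z / (p z + q z)) + q z * log (q z / (p z + q z)))
      = ∑ z, p z * log (p z / m z) + ∑ z, q z * log (q z / m z) - 2 * log 2 := by
    have hpq : ∀ z, p z + q z ≠ 0 := fun z => (add_pos (hp z) (hq z)).ne'
    simp only [mul_log_div_eq_mul_log_div_half_sub _ (hpq _), sum_add_distrib, sum_sub_distrib,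
      ← sum_mul, hp1, hq1, m]
    ring
  have hp0 : ∀ z ∈ univ, 0 ≤ p z := fun z _ => (hp z).le
  have hq0 : ∀ z ∈ univ, 0 ≤ q z := fun z _ => (hq z).le
  have hKLp := sum_mul_log_div_nonneg hp0 hm (hp1.trans hm1.symm)
  have hKLq := sum_mul_log_div_nonneg hq0 hm (hq1.trans hm1.symm)
  rw [hcrit]
  refine ⟨by linarith, ?_⟩
  rw [show -2 * log 2 = 0 - 2 * log 2 by ring, sub_left_inj, add_eq_zero_iff_of_nonneg hKLp hKLq,
    sum_mul_log_div_eq_zero_iff hp0 hm (hp1.trans hm1.symm),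
    sum_mul_log_div_eq_zero_iff hq0 hm (hq1.trans hm1.symm), funext_iff]
  simp only [mem_univ, true_implies, m]
  exact ⟨fun h z => by linarith [h.1 z], fun h => ⟨fun z => by linarith [h z],
    fun z => by linarith [h z]⟩⟩

/-- Global-optimum characterization from Goodfellow et al.'s GAN analysis: for
strictly positive probability mass functions `p` and `q` on a finite set, the
optimal adversarial criterion is at least `-2·log 2`, with equality iff `p = q`. -/
theorem gan_global_optimum
    {S : Type*} [Fintype S] [Nonempty S]
    (p q : S → ℝ) (hp : ∀ z, 0 < p z) (hq : ∀ z, 0 < q z)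
    (hp1 : ∑ z : S, p z = 1) (hq1 : ∑ z : S, q z = 1) :
    ∑ z : S, (p z * Real.log (p z / (p z + q z))
        + q z * Real.log (q z / (p z + q z)))
      ≥ -2 * Real.log 2
    ∧ (∑ z : S, (p z * Real.log (p z / (p z + q z))
          + q z * Real.log (q z / (p z + q z)))
        = -2 * Real.log 2 ↔ p = q) :=
  gan_global_optimum_general p q hp hq hp1 hq1
end
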